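/- Let M be a Hilbert C*-module with a Hilbert dual, f ∈ M' with ⟨f, f⟩' ≥ 1 and J_f = 0. Then the A-linear span M⁰_f = {m + f·a : m ∈ M, a ∈ A} equipped with the inner product ⟨m + f·a, m' + f·a'⟩₊ = ⟨m + f·a, m' + f·a'⟩' + a* c a' (where c = ⟨f, f⟩') is a complete Hilbert C*-module. -/

import Mathlib

open scoped RightActions

/-- The class `CStarModule` as it stood in Mathlib of December 2024 (a right Hilbert
`A`-module, `A` acting through `Aᵐᵒᵖ`); Mathlib's `CStarModule` is now a left module. -/
class RightCStarModule (A : outParam <| Type*) (E : Type*) [NonUnitalSemiring A] [StarRing A]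
    [Module ℂ A] [AddCommGroup E] [Module ℂ E] [PartialOrder A] [SMul Aᵐᵒᵖ E] [Norm A] [Norm E]
    extends Inner A E where
  inner_add_right {x} {y} {z} : inner x (y + z) = inner x y + inner x z
  inner_self_nonneg {x} : 0 ≤ inner x x
  inner_self {x} : inner x x = 0 ↔ x = 0
  inner_op_smul_right {a : A} {x y : E} : inner x (y <• a) = inner x y * a
  inner_smul_right_complex {z : ℂ} {x} {y} : inner x (z • y) = z • inner x y
  star_inner x y : star (inner x y) = inner y x
  norm_eq_sqrt_norm_inner_self x : ‖x‖ = √‖inner x x‖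

section Defs

variable {A : Type*} [CStarAlgebra A] [PartialOrder A] [StarOrderedRing A]
variable {E : Type*} [NormedAddCommGroup E] [NormedSpace ℂ E] [SMul Aᵐᵒᵖ E] [RightCStarModule A E]

/-- Membership in the dual module `M'`: a bounded `A`-antilinear functional on `E`
(the functional `f` plays the role of `m ↦ ⟨m, f⟩`). -/
def IsDualFunctional (f : E → A) : Prop :=
  (∀ x y, f (x + y) = f x + f y) ∧
  (∀ (c : ℂ) (x : E), f (c • x) = (starRingEnd ℂ) c • f x) ∧
  (∀ (x : E) (a : A), f (x <• a) = star a * f x) ∧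
  ∃ C : ℝ, ∀ x, ‖f x‖ ≤ C * ‖x‖

/-- The canonical image `m̂` of `m ∈ M` in the dual module: `m̂ x = ⟨x, m⟩`. -/
def mhat (m : E) : E → A := fun x => inner A x m

/-- The right action of `A` on dual functionals: `f·a`. -/
def dualAct (f : E → A) (a : A) : E → A := fun x => f x * a

/-- The right ideal `J_f = {a ∈ A : f·a ∈ M}`. -/
def Jf (f : E → A) : Set A := {a : A | ∃ m : E, dualAct f a = mhat m}

/-- The right ideal `J_f` is essential in `A`. -/
def JfEssential (f : E → A) : Prop := ∀ a : A, (∀ j ∈ Jf f, a * j = 0) → a = 0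

/-- The norm of a functional in the dual module (operator norm). -/
noncomputable def dualNorm (f : E → A) : ℝ :=
  sInf {C : ℝ | 0 ≤ C ∧ ∀ x, ‖f x‖ ≤ C * ‖x‖}

end Defs

section DualInner

variable {A : Type*} [CStarAlgebra A] [PartialOrder A] [StarOrderedRing A]
variable {E : Type*} [NormedAddCommGroup E] [NormedSpace ℂ E] [SMul Aᵐᵒᵖ E] [RightCStarModule A E]

/-- `inn` is an extension of the inner product of `M` to the dual module `M'`,
making `M'` a (complete) Hilbert C*-module; this is the meaning of
"`M` is a Hilbert C*-module with a Hilbert dual".  -/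
structure IsDualInner (inn : (E → A) → (E → A) → A) : Prop where
  extends_inner : ∀ m n : E, inn (mhat m) (mhat n) = inner A m n
  eval : ∀ f : E → A, IsDualFunctional f → ∀ m : E, f m = inn (mhat m) f
  add_right : ∀ f g h : E → A, inn f (g + h) = inn f g + inn f h
  act_right : ∀ (f g : E → A) (a : A), inn f (dualAct g a) = inn f g * a
  star_inn : ∀ f g : E → A, star (inn f g) = inn g f
  nonneg : ∀ f : E → A, IsDualFunctional f → 0 ≤ inn f f
  definite : ∀ f : E → A, IsDualFunctional f → inn f f = 0 → f = 0
  complete : ∀ u : ℕ → E → A, (∀ n, IsDualFunctional (u n)) →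
    (∀ ε : ℝ, 0 < ε → ∃ N, ∀ p q, N ≤ p → N ≤ q → ‖inn (u p - u q) (u p - u q)‖ < ε) →
    ∃ g : E → A, IsDualFunctional g ∧
      Filter.Tendsto (fun n => ‖inn (u n - g) (u n - g)‖) Filter.atTop (nhds 0)

end DualInner

section Plus

variable {A : Type*} [CStarAlgebra A] [PartialOrder A] [StarOrderedRing A]
variable {E : Type*} [NormedAddCommGroup E] [NormedSpace ℂ E] [SMul Aᵐᵒᵖ E] [RightCStarModule A E]

/-- Since `J_f = 0`, the `A`-linear span `M⁰_f = M ⊕ f·A` is parametrized by pairs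
`(m, a) ∈ M × A` (standing for `m + f·a`).  The perturbed inner product
`⟨m + f·a, m' + f·a'⟩₊ = ⟨m + f·a, m' + f·a'⟩' + a* c a'` with `c = ⟨f, f⟩'`. -/
noncomputable def innPlus (inn : (E → A) → (E → A) → A) (f : E → A) (x y : E × A) : A :=
  inn (mhat x.1 + dualAct f x.2) (mhat y.1 + dualAct f y.2) + star x.2 * inn f f * y.2

end Plus


/-!
The algebraic axioms of `⟨·,·⟩₊` are inherited from `⟨·,·⟩'`, and `⟨f, f⟩' ≥ 1` gives
`a* a ≤ a* c a ≤ ⟨x, x⟩₊` for `x = m + f·a`, hence definiteness. For completeness, `‖⟨x, x⟩₊‖`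
is comparable to `‖m‖² + ‖a‖²` on `M × A`: the triangle inequality for `g ↦ √‖⟨g, g⟩'‖`
(a consequence of Cauchy–Schwarz in `M'`) bounds `‖m‖ = √‖⟨m, m⟩'‖` by
`√‖⟨x, x⟩₊‖ + √‖c‖ ‖a‖`, and bounds `‖⟨x, x⟩₊‖` above by `(‖m‖ + √‖c‖ ‖a‖)² + ‖c‖ ‖a‖²`.
So a `⟨·,·⟩₊`-Cauchy sequence is Cauchy in the complete space `M × A`, and its limit is also
its `⟨·,·⟩₊`-limit.
-/

open Filter Topology

theorem le_mul_of_forall_mul_le {B C W : ℝ} (hB : 0 ≤ B)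
    (h : ∀ t : ℝ, 0 ≤ t → t * B ≤ 1 → t * W ≤ C) : W ≤ B * C := by
  rcases hB.eq_or_lt with rfl | hB
  · have hC : 0 ≤ C := by simpa using h 0 le_rfl (by simp)
    by_contra! hW
    rw [zero_mul] at hW
    have h' := h ((C + 1) / W) (by positivity) (by simp)
    rw [div_mul_cancel₀ _ hW.ne'] at h'
    linarith
  · exact (inv_mul_le_iff₀ hB).1 (h B⁻¹ (inv_nonneg.2 hB.le) (inv_mul_cancel₀ hB.ne').le)

theorem norm_star_mul_mul_self_le {R : Type*} [NormedRing R] [StarRing R] [NormedStarGroup R]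
    (c a : R) : ‖star a * c * a‖ ≤ ‖c‖ * ‖a‖ ^ 2 :=
  calc ‖star a * c * a‖ ≤ ‖star a‖ * ‖c‖ * ‖a‖ := norm_mul₃_le
    _ = ‖c‖ * ‖a‖ ^ 2 := by rw [norm_star]; ring

theorem star_mul_self_le_of_one_le {R : Type*} [Semiring R] [PartialOrder R] [StarRing R]
    [StarOrderedRing R] {c : R} (hc : 1 ≤ c) (a : R) : star a * a ≤ star a * c * a := by
  simpa using star_left_conjugate_le_conjugate hc a

theorem exists_tendsto_of_sq_norm_equiv {V : Type*} [NormedAddCommGroup V] [CompleteSpace V]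
    {φ : V → ℝ} {K L : ℝ} (hφ : ∀ v, 0 ≤ φ v) (hK : ∀ v, ‖v‖ ^ 2 ≤ K * φ v)
    (hL : ∀ v, φ v ≤ L * ‖v‖ ^ 2) {u : ℕ → V}
    (hu : ∀ ε : ℝ, 0 < ε → ∃ N, ∀ p q, N ≤ p → N ≤ q → φ (u p - u q) < ε) :
    ∃ x, Tendsto (fun n => φ (u n - x)) atTop (𝓝 0) := by
  have hcauchy : CauchySeq u := by
    refine Metric.cauchySeq_iff.2 fun ε hε => ?_
    obtain ⟨N, hN⟩ := hu (ε ^ 2 / (|K| + 1)) (by positivity)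
    refine ⟨N, fun p hp q hq => ?_⟩
    have hsq : ‖u p - u q‖ ^ 2 < ε ^ 2 :=
      calc ‖u p - u q‖ ^ 2 ≤ |K| * φ (u p - u q) :=
            (hK _).trans (mul_le_mul_of_nonneg_right (le_abs_self K) (hφ _))
        _ ≤ |K| * (ε ^ 2 / (|K| + 1)) := by gcongr; exact (hN p q hp hq).le
        _ < ε ^ 2 := by
            rw [mul_div_assoc', div_lt_iff₀ (by positivity)]
            nlinarith [abs_nonneg K]
    rw [dist_eq_norm]
    exact (pow_lt_pow_iff_left₀ (norm_nonneg _) hε.le two_ne_zero).1 hsq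
  obtain ⟨x, hx⟩ := cauchySeq_tendsto_of_complete hcauchy
  refine ⟨x, squeeze_zero (fun n => hφ _) (fun n => hL _) ?_⟩
  simpa using ((tendsto_iff_norm_sub_tendsto_zero.1 hx).pow 2).const_mul L

section CStarAlgebra

variable {A : Type*} [CStarAlgebra A] [PartialOrder A] [StarOrderedRing A]

/-- The abstract Cauchy–Schwarz inequality: the hypothesis is the positivity of
`⟨x a - y, x a - y⟩` with `b = ⟨x, x⟩`, `w = ⟨x, y⟩`, `c = ⟨y, y⟩`. -/
theorem CStarAlgebra.norm_sq_le_of_forall_nonneg {b c w : A} (hb : IsSelfAdjoint b)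
    (h : ∀ a : A, 0 ≤ star a * b * a - star a * w - star w * a + c) :
    ‖w‖ ^ 2 ≤ ‖b‖ * ‖c‖ := by
  rw [sq, ← CStarRing.norm_star_mul_self]
  -- Test the hypothesis on `a = t • w`; once `t ‖b‖ ≤ 1`, `t² w* b w ≤ t w* w`.
  refine le_mul_of_forall_mul_le (norm_nonneg b) fun t ht htb => ?_
  have hbw : star w * b * w ≤ ‖b‖ • (star w * w) := by
    simpa [Algebra.algebraMap_eq_smul_one] using
      star_left_conjugate_le_conjugate hb.le_algebraMap_norm_self w
  have hquad : 0 ≤ t ^ 2 • (star w * b * w) - (2 * t) • (star w * w) + c := by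
    have h' := h (t • w)
    simp only [star_smul, star_trivial, smul_mul_assoc, mul_smul_comm, smul_smul] at h'
    convert h' using 1
    module
  have hle : t • (star w * w) ≤ c := by
    rw [← sub_nonneg]
    have hX : 0 ≤ (t - t ^ 2 * ‖b‖) • (star w * w) :=
      smul_nonneg (by nlinarith) (star_mul_self_nonneg w)
    have hY : 0 ≤ t ^ 2 • (‖b‖ • (star w * w) - star w * b * w) :=
      smul_nonneg (by positivity) (sub_nonneg.2 hbw)
    convert add_nonneg (add_nonneg hquad hY) hX using 1
    module
  simpa [norm_smul, abs_of_nonneg ht] using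
    CStarAlgebra.norm_le_norm_of_nonneg_of_le (smul_nonneg ht (star_mul_self_nonneg w)) hle

end CStarAlgebra

section DualAct

variable {A : Type*} [CStarAlgebra A] {E : Type*}

theorem dualAct_add (f : E → A) (a b : A) : dualAct f (a + b) = dualAct f a + dualAct f b := by
  funext x; exact mul_add _ _ _

theorem dualAct_mul (f : E → A) (a b : A) : dualAct f (a * b) = dualAct (dualAct f a) b := by
  funext x; exact (mul_assoc _ _ _).symm

theorem add_dualAct (f g : E → A) (a : A) : dualAct (f + g) a = dualAct f a + dualAct g a := by
  funext x; exact add_mul _ _ _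

theorem dualAct_neg_one (f : E → A) : dualAct f (-1) = -f := by
  funext x; simp [dualAct]

theorem dualAct_zero (f : E → A) : dualAct f 0 = 0 := by
  funext x; simp [dualAct]

end DualAct

namespace IsDualFunctional

variable {A : Type*} [CStarAlgebra A]
variable {E : Type*} [NormedAddCommGroup E] [NormedSpace ℂ E] [SMul Aᵐᵒᵖ E] {f g : E → A}

theorem add (hf : IsDualFunctional f) (hg : IsDualFunctional g) : IsDualFunctional (f + g) := by
  obtain ⟨f_add, f_smul, f_op_smul, Cf, f_bdd⟩ := hf
  obtain ⟨g_add, g_smul, g_op_smul, Cg, g_bdd⟩ := hg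
  refine ⟨fun x y => ?_, fun c x => ?_, fun x a => ?_, Cf + Cg, fun x => ?_⟩
  · simp only [Pi.add_apply, f_add, g_add]; abel
  · simp only [Pi.add_apply, f_smul, g_smul, smul_add]
  · simp only [Pi.add_apply, f_op_smul, g_op_smul, mul_add]
  · calc ‖f x + g x‖ ≤ Cf * ‖x‖ + Cg * ‖x‖ :=
          (norm_add_le _ _).trans (add_le_add (f_bdd x) (g_bdd x))
      _ = (Cf + Cg) * ‖x‖ := by ring

theorem dualAct (hf : IsDualFunctional f) (a : A) : IsDualFunctional (dualAct f a) := by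
  obtain ⟨f_add, f_smul, f_op_smul, Cf, f_bdd⟩ := hf
  refine ⟨fun x y => ?_, fun c x => ?_, fun x b => ?_, Cf * ‖a‖, fun x => ?_⟩
  · simp [_root_.dualAct, f_add, add_mul]
  · simp [_root_.dualAct, f_smul]
  · simp [_root_.dualAct, f_op_smul, mul_assoc]
  · calc ‖f x * a‖ ≤ Cf * ‖x‖ * ‖a‖ := (norm_mul_le _ _).trans (by gcongr; exact f_bdd x)
      _ = Cf * ‖a‖ * ‖x‖ := by ring

theorem sub (hf : IsDualFunctional f) (hg : IsDualFunctional g) : IsDualFunctional (f - g) := by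
  simpa [sub_eq_add_neg, dualAct_neg_one] using hf.add (hg.dualAct (-1))

end IsDualFunctional

section RightCStarModule

variable {A : Type*} [CStarAlgebra A] [PartialOrder A]
variable {E : Type*} [NormedAddCommGroup E] [NormedSpace ℂ E] [SMul Aᵐᵒᵖ E] [RightCStarModule A E]

namespace RightCStarModule

theorem inner_add_left (x y z : E) : inner A (x + y) z = inner A x z + inner A y z := by
  rw [← star_inner, inner_add_right, star_add, star_inner, star_inner]

theorem inner_sub_right (x y z : E) : inner A x (y - z) = inner A x y - inner A x z := by
  rw [sub_eq_add_neg, inner_add_right, ← neg_one_smul ℂ z, inner_smul_right_complex,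
    neg_one_smul, sub_eq_add_neg]

theorem inner_sub_left (x y z : E) : inner A (x - y) z = inner A x z - inner A y z := by
  rw [← star_inner, inner_sub_right, star_sub, star_inner, star_inner]

theorem inner_op_smul_left (a : A) (x y : E) : inner A (x <• a) y = star a * inner A x y := by
  rw [← star_inner, inner_op_smul_right, star_mul, star_inner]

theorem inner_smul_left_complex (c : ℂ) (x y : E) :
    inner A (c • x) y = star c • inner A x y := by
  rw [← star_inner, inner_smul_right_complex, star_smul, star_inner]

theorem norm_sq_eq_norm_inner_self (x : E) : ‖x‖ ^ 2 = ‖inner A x x‖ := by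
  rw [norm_eq_sqrt_norm_inner_self (A := A) x, Real.sq_sqrt (norm_nonneg _)]

theorem norm_inner_le [StarOrderedRing A] (x y : E) : ‖inner A x y‖ ≤ ‖x‖ * ‖y‖ := by
  have hcs : ‖inner A x y‖ ^ 2 ≤ ‖inner A x x‖ * ‖inner A y y‖ := by
    refine CStarAlgebra.norm_sq_le_of_forall_nonneg (star_inner x x) fun a => ?_
    have h := inner_self_nonneg (A := A) (x := x <• a - y)
    simp only [inner_sub_left, inner_sub_right, inner_op_smul_left, inner_op_smul_right] at h
    rw [star_inner]
    convert h using 1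
    noncomm_ring
  rw [← norm_sq_eq_norm_inner_self, ← norm_sq_eq_norm_inner_self, ← mul_pow] at hcs
  exact (pow_le_pow_iff_left₀ (norm_nonneg _) (by positivity) two_ne_zero).1 hcs

end RightCStarModule

open RightCStarModule

theorem mhat_add (m n : E) : mhat (A := A) (m + n) = mhat m + mhat n := by
  funext x; exact inner_add_right

theorem mhat_op_smul (m : E) (a : A) : mhat (m <• a) = dualAct (mhat m) a := by
  funext x; exact inner_op_smul_right

theorem isDualFunctional_mhat [StarOrderedRing A] (m : E) : IsDualFunctional (mhat (A := A) m) :=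
  ⟨fun _ _ => inner_add_left _ _ _, fun _ _ => inner_smul_left_complex _ _ _,
    fun _ _ => inner_op_smul_left _ _ _,
    ‖m‖, fun x => (norm_inner_le x m).trans_eq (mul_comm _ _)⟩

end RightCStarModule

namespace IsDualInner

variable {A : Type*} [CStarAlgebra A] [PartialOrder A]
variable {E : Type*} [NormedAddCommGroup E] [NormedSpace ℂ E] [SMul Aᵐᵒᵖ E] [RightCStarModule A E]
variable {inn : (E → A) → (E → A) → A}

theorem add_left (hinn : IsDualInner inn) (f g h : E → A) :
    inn (f + g) h = inn f h + inn g h := by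
  rw [← hinn.star_inn, hinn.add_right, star_add, hinn.star_inn, hinn.star_inn]

theorem act_left (hinn : IsDualInner inn) (f g : E → A) (a : A) :
    inn (dualAct f a) g = star a * inn f g := by
  rw [← hinn.star_inn, hinn.act_right, star_mul, hinn.star_inn]

theorem sub_right (hinn : IsDualInner inn) (f g h : E → A) :
    inn f (g - h) = inn f g - inn f h := by
  rw [sub_eq_add_neg, hinn.add_right, ← dualAct_neg_one, hinn.act_right, mul_neg_one,
    sub_eq_add_neg]

theorem sub_left (hinn : IsDualInner inn) (f g h : E → A) :
    inn (f - g) h = inn f h - inn g h := by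
  rw [← hinn.star_inn, hinn.sub_right, star_sub, hinn.star_inn, hinn.star_inn]

theorem dualAct_self (hinn : IsDualInner inn) (f : E → A) (a : A) :
    inn (dualAct f a) (dualAct f a) = star a * inn f f * a := by
  rw [hinn.act_right, hinn.act_left]

theorem sqrt_norm_mhat (hinn : IsDualInner inn) (m : E) :
    √‖inn (mhat m) (mhat m)‖ = ‖m‖ := by
  rw [hinn.extends_inner]
  exact (RightCStarModule.norm_eq_sqrt_norm_inner_self (A := A) m).symm

variable [StarOrderedRing A] {g h : E → A}

theorem norm_sq_le (hinn : IsDualInner inn) (hg : IsDualFunctional g)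
    (hh : IsDualFunctional h) : ‖inn g h‖ ^ 2 ≤ ‖inn g g‖ * ‖inn h h‖ := by
  refine CStarAlgebra.norm_sq_le_of_forall_nonneg (hinn.star_inn g g) fun a => ?_
  have hpos := hinn.nonneg _ ((hg.dualAct a).sub hh)
  simp only [hinn.sub_left, hinn.sub_right, hinn.act_left, hinn.act_right] at hpos
  rw [hinn.star_inn]
  convert hpos using 1
  noncomm_ring

theorem sqrt_norm_add_le (hinn : IsDualInner inn) (hg : IsDualFunctional g)
    (hh : IsDualFunctional h) :
    √‖inn (g + h) (g + h)‖ ≤ √‖inn g g‖ + √‖inn h h‖ := by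
  have hcs : ‖inn g h‖ ≤ √‖inn g g‖ * √‖inn h h‖ := by
    rw [← Real.sqrt_mul (norm_nonneg _)]
    exact Real.le_sqrt_of_sq_le (hinn.norm_sq_le hg hh)
  have hexp : inn (g + h) (g + h) = inn g g + inn g h + star (inn g h) + inn h h := by
    rw [hinn.add_right, hinn.add_left, hinn.add_left, hinn.star_inn]
    abel
  refine Real.sqrt_le_iff.2 ⟨by positivity, ?_⟩
  calc ‖inn (g + h) (g + h)‖ ≤ ‖inn g g‖ + ‖inn g h‖ + ‖star (inn g h)‖ + ‖inn h h‖ := by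
        rw [hexp]; exact norm_add₄_le
    _ ≤ (√‖inn g g‖ + √‖inn h h‖) ^ 2 := by
        rw [norm_star, add_sq, Real.sq_sqrt (norm_nonneg _), Real.sq_sqrt (norm_nonneg _)]
        linarith

end IsDualInner

section Plus

variable {A : Type*} [CStarAlgebra A] [PartialOrder A]
variable {E : Type*} [NormedAddCommGroup E] [NormedSpace ℂ E] [SMul Aᵐᵒᵖ E] [RightCStarModule A E]
variable {inn : (E → A) → (E → A) → A} {f : E → A}

def pairToDual (f : E → A) (x : E × A) : E → A := mhat x.1 + dualAct f x.2

theorem innPlus_eq (x y : E × A) :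
    innPlus inn f x y = inn (pairToDual f x) (pairToDual f y) + star x.2 * inn f f * y.2 := rfl

theorem pairToDual_add (x y : E × A) : pairToDual f (x + y) = pairToDual f x + pairToDual f y := by
  rw [pairToDual, Prod.fst_add, Prod.snd_add, mhat_add, dualAct_add, pairToDual, pairToDual]
  abel

theorem pairToDual_op_smul (x : E × A) (b : A) :
    pairToDual f (x.1 <• b, x.2 * b) = dualAct (pairToDual f x) b := by
  rw [pairToDual, pairToDual, mhat_op_smul, dualAct_mul, add_dualAct]

theorem innPlus_add_right (hinn : IsDualInner inn) (x y z : E × A) :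
    innPlus inn f x (y + z) = innPlus inn f x y + innPlus inn f x z := by
  rw [innPlus_eq, innPlus_eq, innPlus_eq, pairToDual_add, hinn.add_right, Prod.snd_add, mul_add]
  abel

theorem innPlus_op_smul_right (hinn : IsDualInner inn) (x y : E × A) (b : A) :
    innPlus inn f x (y.1 <• b, y.2 * b) = innPlus inn f x y * b := by
  rw [innPlus_eq, innPlus_eq, pairToDual_op_smul, hinn.act_right, add_mul, mul_assoc _ y.2]

theorem star_innPlus (hinn : IsDualInner inn) (x y : E × A) :
    star (innPlus inn f x y) = innPlus inn f y x := by
  simp only [innPlus, star_add, star_mul, star_star, hinn.star_inn, mul_assoc]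

theorem sqrt_norm_inn_dualAct_le (hinn : IsDualInner inn) (a : A) :
    √‖inn (dualAct f a) (dualAct f a)‖ ≤ √‖inn f f‖ * ‖a‖ := by
  rw [hinn.dualAct_self, ← Real.sqrt_sq (norm_nonneg a), ← Real.sqrt_mul (norm_nonneg _)]
  exact Real.sqrt_le_sqrt (norm_star_mul_mul_self_le _ _)

variable [StarOrderedRing A]

theorem isDualFunctional_pairToDual (hf : IsDualFunctional f) (x : E × A) :
    IsDualFunctional (pairToDual f x) :=
  (isDualFunctional_mhat _).add (hf.dualAct _)

theorem innPlus_self_nonneg (hinn : IsDualInner inn) (hf : IsDualFunctional f) (x : E × A) :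
    0 ≤ innPlus inn f x x :=
  add_nonneg (hinn.nonneg _ (isDualFunctional_pairToDual hf x))
    (star_left_conjugate_nonneg (hinn.nonneg f hf) x.2)

theorem innPlus_self_eq_zero (hinn : IsDualInner inn) (hf : IsDualFunctional f)
    (hf1 : 1 ≤ inn f f) {x : E × A} (hx : innPlus inn f x x = 0) : x = 0 := by
  obtain ⟨hG, hc⟩ := (add_eq_zero_iff_of_nonneg (hinn.nonneg _ (isDualFunctional_pairToDual hf x))
    (star_left_conjugate_nonneg (hinn.nonneg f hf) x.2)).1 hx
  have hx2 : x.2 = 0 := (CStarRing.star_mul_self_eq_zero_iff _).1 <|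
    le_antisymm ((star_mul_self_le_of_one_le hf1 _).trans_eq hc) (star_mul_self_nonneg _)
  rw [pairToDual, hx2, dualAct_zero, add_zero, hinn.extends_inner,
    RightCStarModule.inner_self] at hG
  exact Prod.ext hG hx2

theorem norm_snd_sq_le_norm_innPlus (hinn : IsDualInner inn) (hf : IsDualFunctional f)
    (hf1 : 1 ≤ inn f f) (x : E × A) : ‖x.2‖ ^ 2 ≤ ‖innPlus inn f x x‖ := by
  rw [sq, ← CStarRing.norm_star_mul_self]
  exact CStarAlgebra.norm_le_norm_of_nonneg_of_le (star_mul_self_nonneg _) <|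
    (star_mul_self_le_of_one_le hf1 _).trans
      (le_add_of_nonneg_left (hinn.nonneg _ (isDualFunctional_pairToDual hf x)))

theorem norm_inn_pairToDual_le_norm_innPlus (hinn : IsDualInner inn) (hf : IsDualFunctional f)
    (x : E × A) : ‖inn (pairToDual f x) (pairToDual f x)‖ ≤ ‖innPlus inn f x x‖ :=
  CStarAlgebra.norm_le_norm_of_nonneg_of_le (hinn.nonneg _ (isDualFunctional_pairToDual hf x)) <|
    le_add_of_nonneg_right (star_left_conjugate_nonneg (hinn.nonneg f hf) x.2)

theorem sqrt_norm_inn_pairToDual_le (hinn : IsDualInner inn) (hf : IsDualFunctional f)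
    (x : E × A) : √‖inn (pairToDual f x) (pairToDual f x)‖ ≤ ‖x.1‖ + √‖inn f f‖ * ‖x.2‖ := by
  refine (hinn.sqrt_norm_add_le (isDualFunctional_mhat _) (hf.dualAct _)).trans ?_
  rw [hinn.sqrt_norm_mhat]
  gcongr
  exact sqrt_norm_inn_dualAct_le hinn _

theorem norm_fst_le_sqrt_norm_inn_pairToDual (hinn : IsDualInner inn) (hf : IsDualFunctional f)
    (x : E × A) : ‖x.1‖ ≤ √‖inn (pairToDual f x) (pairToDual f x)‖ + √‖inn f f‖ * ‖x.2‖ := by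
  have hsplit : mhat x.1 = pairToDual f x + dualAct f (-x.2) := by
    rw [pairToDual, add_assoc, ← dualAct_add, add_neg_cancel, dualAct_zero, add_zero]
  rw [← hinn.sqrt_norm_mhat x.1, hsplit, ← norm_neg x.2]
  exact (hinn.sqrt_norm_add_le (isDualFunctional_pairToDual hf x) (hf.dualAct _)).trans
    (add_le_add le_rfl (sqrt_norm_inn_dualAct_le hinn _))

theorem norm_sq_le_norm_innPlus (hinn : IsDualInner inn) (hf : IsDualFunctional f)
    (hf1 : 1 ≤ inn f f) (x : E × A) :
    ‖x‖ ^ 2 ≤ (1 + √‖inn f f‖) ^ 2 * ‖innPlus inn f x x‖ := by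
  set s := √‖innPlus inn f x x‖
  have hsnd : ‖x.2‖ ≤ s := Real.le_sqrt_of_sq_le (norm_snd_sq_le_norm_innPlus hinn hf hf1 x)
  have hG : √‖inn (pairToDual f x) (pairToDual f x)‖ ≤ s :=
    Real.sqrt_le_sqrt (norm_inn_pairToDual_le_norm_innPlus hinn hf x)
  have hfst : ‖x.1‖ ≤ (1 + √‖inn f f‖) * s := by
    have := norm_fst_le_sqrt_norm_inn_pairToDual hinn hf x
    nlinarith [Real.sqrt_nonneg ‖inn f f‖]
  have hx : ‖x‖ ≤ (1 + √‖inn f f‖) * s := by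
    rw [Prod.norm_def]
    refine max_le hfst (hsnd.trans ?_)
    nlinarith [Real.sqrt_nonneg ‖inn f f‖, Real.sqrt_nonneg ‖innPlus inn f x x‖]
  calc ‖x‖ ^ 2 ≤ ((1 + √‖inn f f‖) * s) ^ 2 := by gcongr
    _ = _ := by rw [mul_pow, Real.sq_sqrt (norm_nonneg _)]

theorem norm_innPlus_le_norm_sq (hinn : IsDualInner inn) (hf : IsDualFunctional f)
    (x : E × A) : ‖innPlus inn f x x‖ ≤ ((1 + √‖inn f f‖) ^ 2 + ‖inn f f‖) * ‖x‖ ^ 2 := by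
  have hG : √‖inn (pairToDual f x) (pairToDual f x)‖ ≤ (1 + √‖inn f f‖) * ‖x‖ :=
    calc √‖inn (pairToDual f x) (pairToDual f x)‖ ≤ ‖x.1‖ + √‖inn f f‖ * ‖x.2‖ :=
          sqrt_norm_inn_pairToDual_le hinn hf x
      _ ≤ ‖x‖ + √‖inn f f‖ * ‖x‖ := by gcongr; exacts [norm_fst_le x, norm_snd_le x]
      _ = (1 + √‖inn f f‖) * ‖x‖ := by ring
  calc ‖innPlus inn f x x‖
      ≤ ‖inn (pairToDual f x) (pairToDual f x)‖ + ‖inn f f‖ * ‖x.2‖ ^ 2 :=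
        (norm_add_le _ _).trans (add_le_add le_rfl (norm_star_mul_mul_self_le _ _))
    _ ≤ ((1 + √‖inn f f‖) * ‖x‖) ^ 2 + ‖inn f f‖ * ‖x‖ ^ 2 := by
        gcongr
        · exact (Real.sqrt_le_iff.1 hG).2
        · exact norm_snd_le x
    _ = ((1 + √‖inn f f‖) ^ 2 + ‖inn f f‖) * ‖x‖ ^ 2 := by ring

end Plus

variable {A : Type*} [CStarAlgebra A] [PartialOrder A] [StarOrderedRing A]
variable {E : Type*} [NormedAddCommGroup E] [NormedSpace ℂ E] [SMul Aᵐᵒᵖ E] [RightCStarModule A E]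

theorem innPlus_hilbert_complete_general [CompleteSpace E]
    (inn : (E → A) → (E → A) → A) (hinn : IsDualInner inn)
    (f : E → A) (hf : IsDualFunctional f)
    (hf1 : (1 : A) ≤ inn f f) :
    (∀ x y z : E × A, innPlus inn f x (y + z) = innPlus inn f x y + innPlus inn f x z) ∧
    (∀ (x y : E × A) (b : A),
      innPlus inn f x (y.1 <• b, y.2 * b) = innPlus inn f x y * b) ∧
    (∀ x y : E × A, star (innPlus inn f x y) = innPlus inn f y x) ∧
    (∀ x : E × A, 0 ≤ innPlus inn f x x) ∧
    (∀ x : E × A, innPlus inn f x x = 0 → x = 0) ∧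
    (∀ u : ℕ → E × A,
      (∀ ε : ℝ, 0 < ε → ∃ N, ∀ p q, N ≤ p → N ≤ q →
        ‖innPlus inn f (u p - u q) (u p - u q)‖ < ε) →
      ∃ x : E × A, Filter.Tendsto (fun n => ‖innPlus inn f (u n - x) (u n - x)‖)
        Filter.atTop (nhds 0)) := by
  refine ⟨innPlus_add_right hinn, innPlus_op_smul_right hinn, star_innPlus hinn,
    innPlus_self_nonneg hinn hf, fun _ => innPlus_self_eq_zero hinn hf hf1, fun _ hu => ?_⟩
  exact exists_tendsto_of_sq_norm_equiv (fun _ => norm_nonneg _)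
    (norm_sq_le_norm_innPlus hinn hf hf1) (norm_innPlus_le_norm_sq hinn hf) hu

/-- Let `M` have a Hilbert dual, `f ∈ M'` with `⟨f, f⟩' ≥ 1` and `J_f = 0`.  Then
`M⁰_f = M ⊕ f·A` equipped with `⟨·,·⟩₊` is a (complete) Hilbert C*-module. -/
theorem innPlus_hilbert_complete [CompleteSpace E]
    (inn : (E → A) → (E → A) → A) (hinn : IsDualInner inn)
    (f : E → A) (hf : IsDualFunctional f)
    (hf1 : (1 : A) ≤ inn f f) (hJ : Jf f = {0}) :
    (∀ x y z : E × A, innPlus inn f x (y + z) = innPlus inn f x y + innPlus inn f x z) ∧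
    (∀ (x y : E × A) (b : A),
      innPlus inn f x (y.1 <• b, y.2 * b) = innPlus inn f x y * b) ∧
    (∀ x y : E × A, star (innPlus inn f x y) = innPlus inn f y x) ∧
    (∀ x : E × A, 0 ≤ innPlus inn f x x) ∧
    (∀ x : E × A, innPlus inn f x x = 0 → x = 0) ∧
    (∀ u : ℕ → E × A,
      (∀ ε : ℝ, 0 < ε → ∃ N, ∀ p q, N ≤ p → N ≤ q →
        ‖innPlus inn f (u p - u q) (u p - u q)‖ < ε) →
      ∃ x : E × A, Filter.Tendsto (fun n => ‖innPlus inn f (u n - x) (u n - x)‖)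
        Filter.atTop (nhds 0)) :=
  innPlus_hilbert_complete_general inn hinn f hf hf1
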